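/- For every integer m ≥ 1, the finite simple continued fraction [11,11,…,11,3] consisting of m elevens followed by a final entry 3 equals F_{5m+4}/F_{5m−1}. -/

import Mathlib

/-! Each leading 11 acts on a ratio `p / q` as `p / q ↦ (11 p + q) / p`, and the Fibonacci
identity `F (n + 10) = 11 F (n + 5) + F n` shows that this map sends `F (5k + 9) / F (5k + 4)`
to `F (5k + 14) / F (5k + 9)`; the base case is `[11, 3] = 34 / 3 = F 9 / F 4`. -/

def cf : List ℤ → ℚ
  | [] => 0
  | [a] => (a : ℚ)
  | a :: b :: l => (a : ℚ) + (cf (b :: l))⁻¹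

lemma cf_cons {l : List ℤ} (hl : l ≠ []) (a : ℤ) : cf (a :: l) = a + (cf l)⁻¹ := by
  obtain ⟨b, l, rfl⟩ := List.exists_cons_of_ne_nil hl
  rfl

lemma cf_cons_of_eq_div {l : List ℤ} (hl : l ≠ []) {p q : ℚ} (hp : p ≠ 0) (h : cf l = p / q)
    (a : ℤ) : cf (a :: l) = (a * p + q) / p := by
  rw [cf_cons hl, h, inv_div]
  field_simp

lemma Nat.fib_add_ten (n : ℕ) : fib (n + 10) = 11 * fib (n + 5) + fib n := by
  simp only [fib_add_two]
  ring

lemma cf_replicate_succ_eleven_append_three (k : ℕ) :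
    cf (List.replicate (k + 1) 11 ++ [3]) = (Nat.fib (5 * k + 9) : ℚ) / Nat.fib (5 * k + 4) := by
  induction k with
  | zero => norm_num [cf]
  | succ k ih =>
    have hfib : (Nat.fib (5 * k + 9) : ℚ) ≠ 0 := by
      exact_mod_cast (Nat.fib_pos.mpr (by omega)).ne'
    rw [List.replicate_succ, List.cons_append,
      cf_cons_of_eq_div (by simp) hfib ih, show 5 * (k + 1) + 9 = 5 * k + 4 + 10 by ring,
      Nat.fib_add_ten]
    push_cast
    ring_nf

theorem cf_elevens_three (m : ℕ) (hm : 1 ≤ m) :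
    cf (List.replicate m 11 ++ [3]) =
      (Nat.fib (5 * m + 4) : ℚ) / (Nat.fib (5 * m - 1) : ℚ) := by
  obtain ⟨k, rfl⟩ := Nat.exists_eq_add_of_le' hm
  rw [cf_replicate_succ_eleven_append_three, show 5 * (k + 1) - 1 = 5 * k + 4 by omega]
  ring_nf
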